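/- Embeddings into Morrey spaces on ℝ²×𝕋: (i) L^p ⊂ M^p_q for all 1 ≤ q ≤ p; (ii) the mixed space B_{x_3}L^q_x embeds into M^{3q/2}_q, i.e. ‖f‖_{M^{3q/2}_q} ≲ ‖f‖_{B_{x_3}L^q_x}. -/

import Mathlib

open MeasureTheory Real
open scoped ENNReal NNReal

noncomputable section

abbrev T2pi := AddCircle (2 * Real.pi)
instance : Fact (0 < 2 * Real.pi) := ⟨by positivity⟩
abbrev E2 := EuclideanSpace ℝ (Fin 2)

/-- The Morrey norm `M^p_q` on `ℝ²×𝕋`. -/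
def morreyNorm (p q : ℝ) (f : E2 × T2pi → ℂ) : ℝ≥0∞ :=
  ⨆ (y : E2 × T2pi) (l : ℝ) (_ : 0 < l),
    (volume (Metric.ball y l)) ^ (1 / p - 1 / q) *
      (∫⁻ x in Metric.ball y l, (‖f x‖₊ : ℝ≥0∞) ^ q) ^ (1 / q)

/-- The mixed Wiener-type norm `‖f‖_{B_{x₃}L^q} = Σ_ζ ‖f̂(·,ζ)‖_{L^q(ℝ²)}`. -/
def BLp (p : ℝ≥0∞) (f : E2 × T2pi → ℂ) : ℝ≥0∞ :=
  ∑' ζ : ℤ, eLpNorm (fun xt : E2 => fourierCoeff (fun z => f (xt, z)) ζ) p volume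

/-! ### Auxiliary lemmas -/

lemma aux_iSup_rpow {ι : Sort*} (f : ι → ℝ≥0∞) {q : ℝ} (hq : 0 < q) :
    (⨆ i, f i) ^ q = ⨆ i, (f i) ^ q := by
  refine le_antisymm ?_ (iSup_le fun i => ENNReal.rpow_le_rpow (le_iSup f i) hq.le)
  have h1 : (⨆ i, f i) ≤ (⨆ i, (f i) ^ q) ^ (1 / q) := by
    refine iSup_le fun i => ?_
    have hfi : f i = ((f i) ^ q) ^ (1 / q) := by
      rw [← ENNReal.rpow_mul, mul_one_div_cancel hq.ne', ENNReal.rpow_one]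
    rw [hfi]
    exact ENNReal.rpow_le_rpow (le_iSup (fun j => f j ^ q) i) (by positivity)
  calc (⨆ i, f i) ^ q ≤ ((⨆ i, (f i) ^ q) ^ (1 / q)) ^ q :=
        ENNReal.rpow_le_rpow h1 hq.le
    _ = ⨆ i, (f i) ^ q := by
        rw [← ENNReal.rpow_mul, one_div_mul_cancel hq.ne', ENNReal.rpow_one]

/-- Minkowski's inequality for a countable sum, in `lintegral` form. -/
lemma aux_lintegral_lp_tsum_le {α : Type*} [MeasurableSpace α] {μ : Measure α} {q : ℝ}
    (hq : 1 ≤ q) {h : ℤ → α → ℝ≥0∞} (hm : ∀ ζ, Measurable (h ζ)) :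
    (∫⁻ x, (∑' ζ, h ζ x) ^ q ∂μ) ^ (1 / q) ≤ ∑' ζ, (∫⁻ x, h ζ x ^ q ∂μ) ^ (1 / q) := by
  classical
  have hq0 : (0 : ℝ) < q := lt_of_lt_of_le one_pos hq
  have hq0' : (0 : ℝ) < 1 / q := by positivity
  have hfin : ∀ s : Finset ℤ, (∫⁻ x, (∑ ζ ∈ s, h ζ x) ^ q ∂μ) ^ (1 / q)
      ≤ ∑ ζ ∈ s, (∫⁻ x, h ζ x ^ q ∂μ) ^ (1 / q) := by
    intro s
    induction s using Finset.induction with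
    | empty =>
        simp only [Finset.sum_empty, ENNReal.zero_rpow_of_pos hq0, lintegral_zero,
          ENNReal.zero_rpow_of_pos hq0', le_refl]
    | @insert a s ha ih =>
        have hmsum : Measurable fun x => ∑ ζ ∈ s, h ζ x :=
          Finset.measurable_sum s fun ζ _ => hm ζ
        have trig : (∫⁻ x, (h a x + ∑ ζ ∈ s, h ζ x) ^ q ∂μ) ^ (1 / q)
            ≤ (∫⁻ x, h a x ^ q ∂μ) ^ (1 / q) + (∫⁻ x, (∑ ζ ∈ s, h ζ x) ^ q ∂μ) ^ (1 / q) := by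
          simpa using ENNReal.lintegral_Lp_add_le (μ := μ) (f := h a)
            (g := fun x => ∑ ζ ∈ s, h ζ x) (hm a).aemeasurable hmsum.aemeasurable hq
        simp_rw [Finset.sum_insert ha]
        exact trig.trans (add_le_add_right ih _)
  have hL : ∫⁻ x, (∑' ζ, h ζ x) ^ q ∂μ
      = ⨆ s : Finset ℤ, ∫⁻ x, (∑ ζ ∈ s, h ζ x) ^ q ∂μ := by
    rw [← lintegral_iSup_directed]
    · refine lintegral_congr fun x => ?_
      rw [ENNReal.tsum_eq_iSup_sum, aux_iSup_rpow _ hq0]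
    · exact fun s => ((Finset.measurable_sum s fun ζ _ => hm ζ).pow_const q).aemeasurable
    · intro s t
      refine ⟨s ∪ t, fun x => ?_, fun x => ?_⟩
      · exact ENNReal.rpow_le_rpow
          (Finset.sum_le_sum_of_subset Finset.subset_union_left) hq0.le
      · exact ENNReal.rpow_le_rpow
          (Finset.sum_le_sum_of_subset Finset.subset_union_right) hq0.le
  rw [hL, aux_iSup_rpow _ hq0']
  exact iSup_le fun s => (hfin s).trans (ENNReal.sum_le_tsum s)

/-- Pointwise bound of a continuous function on the circle by the sum of the norms of its
Fourier coefficients. -/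
lemma aux_pointwise_fourier {h : T2pi → ℂ} (hc : Continuous h) (z : T2pi) :
    (‖h z‖₊ : ℝ≥0∞) ≤ ∑' ζ : ℤ, (‖fourierCoeff h ζ‖₊ : ℝ≥0∞) := by
  by_cases hs : Summable fun ζ : ℤ => ‖fourierCoeff h ζ‖
  · set H : C(T2pi, ℂ) := ⟨h, hc⟩ with hH
    have hco : fourierCoeff (⇑H) = fourierCoeff h := rfl
    have hsum : Summable (fourierCoeff (⇑H)) := by
      rw [hco]; exact Summable.of_norm hs
    have hps := has_pointwise_sum_fourier_series_of_summable (f := H) hsum z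
    have hsn : Summable fun ζ : ℤ => ‖fourierCoeff (⇑H) ζ • fourier ζ z‖ := by
      refine Summable.of_nonneg_of_le (fun ζ => norm_nonneg _) (fun ζ => ?_) hs
      rw [norm_smul, hco]
      calc ‖fourierCoeff h ζ‖ * ‖fourier ζ z‖
          ≤ ‖fourierCoeff h ζ‖ * 1 := by
            refine mul_le_mul_of_nonneg_left ?_ (norm_nonneg _)
            calc ‖fourier ζ z‖ ≤ ‖(fourier ζ : C(T2pi, ℂ))‖ :=
              ContinuousMap.norm_coe_le_norm _ z
            _ = 1 := fourier_norm ζ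
        _ = ‖fourierCoeff h ζ‖ := mul_one _
    have h1 : ‖h z‖ ≤ ∑' ζ : ℤ, ‖fourierCoeff h ζ‖ := by
      have hHz : h z = ∑' ζ : ℤ, fourierCoeff (⇑H) ζ • fourier ζ z := hps.tsum_eq.symm
      rw [hHz]
      refine le_trans (norm_tsum_le_tsum_norm hsn) ?_
      refine Summable.tsum_le_tsum (fun ζ => ?_) hsn hs
      rw [norm_smul, hco]
      refine mul_le_of_le_one_right (norm_nonneg _) ?_
      calc ‖fourier ζ z‖ ≤ ‖(fourier ζ : C(T2pi, ℂ))‖ := ContinuousMap.norm_coe_le_norm _ z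
        _ = 1 := fourier_norm ζ
    calc (‖h z‖₊ : ℝ≥0∞) = ENNReal.ofReal ‖h z‖ := (ofReal_norm _).symm
      _ ≤ ENNReal.ofReal (∑' ζ : ℤ, ‖fourierCoeff h ζ‖) := ENNReal.ofReal_le_ofReal h1
      _ = ∑' ζ : ℤ, ENNReal.ofReal ‖fourierCoeff h ζ‖ :=
          ENNReal.ofReal_tsum_of_nonneg (fun ζ => norm_nonneg _) hs
      _ = ∑' ζ : ℤ, (‖fourierCoeff h ζ‖₊ : ℝ≥0∞) :=
          tsum_congr fun ζ => ofReal_norm _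
  · have htop : ∑' ζ : ℤ, (‖fourierCoeff h ζ‖₊ : ℝ≥0∞) = ∞ := by
      by_contra hne
      have : Summable fun ζ : ℤ => ‖fourierCoeff h ζ‖₊ :=
        ENNReal.tsum_coe_ne_top_iff_summable.mp hne
      exact hs (NNReal.summable_coe.mpr this)
    simp [htop]

/-- Embeddings into Morrey spaces on `ℝ²×𝕋`:
(i) `L^p ⊂ M^p_q` for `1 ≤ q ≤ p`; (ii) `B_{x₃}L^q ⊂ M^{3q/2}_q`. -/
theorem morrey_embeddings (q p : ℝ) (hq : 1 ≤ q) (hqp : q ≤ p) :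
    (∃ C : ℝ, 0 < C ∧ ∀ f : E2 × T2pi → ℂ,
      morreyNorm p q f ≤ ENNReal.ofReal C * eLpNorm f (ENNReal.ofReal p) volume) ∧
    (∃ C : ℝ, 0 < C ∧ ∀ f : E2 × T2pi → ℂ, Continuous f →
      morreyNorm (3 * q / 2) q f ≤ ENNReal.ofReal C * BLp (ENNReal.ofReal q) f) := by
  have hq0 : (0 : ℝ) < q := lt_of_lt_of_le one_pos hq
  have hp0 : (0 : ℝ) < p := lt_of_lt_of_le hq0 hqp
  -- generic facts about balls in the product space
  have ball_facts : ∀ (y1 : E2) (y2 : T2pi) (l : ℝ), 0 < l →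
      volume (Metric.ball ((y1, y2) : E2 × T2pi) l)
        = volume (Metric.ball y1 l) * volume (Metric.ball y2 l) := by
    intro y1 y2 l _
    rw [← ball_prod_same, Measure.volume_eq_prod, Measure.prod_prod]
  have hT0 : (0 : ℝ) < 2 * π := by positivity
  have tball_le : ∀ (y2 : T2pi) (l : ℝ), 0 < l →
      volume (Metric.ball y2 l) ≤ ENNReal.ofReal (2 * l) := by
    intro y2 l _
    refine le_trans (measure_mono Metric.ball_subset_closedBall) ?_
    rw [AddCircle.volume_closedBall]
    exact ENNReal.ofReal_le_ofReal (min_le_right _ _)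
  have tball_pos : ∀ (y2 : T2pi) (l : ℝ), 0 < l → 0 < volume (Metric.ball y2 l) := by
    intro y2 l hl
    have hsub : Metric.closedBall y2 (l / 2) ⊆ Metric.ball y2 l :=
      Metric.closedBall_subset_ball (by linarith)
    refine lt_of_lt_of_le ?_ (measure_mono hsub)
    rw [AddCircle.volume_closedBall]
    exact ENNReal.ofReal_pos.mpr (lt_min hT0 (by linarith))
  have eball_pos : ∀ (y1 : E2) (l : ℝ), 0 < l → 0 < volume (Metric.ball y1 l) :=
    fun y1 l hl => Metric.measure_ball_pos _ _ hl
  have eball_fin : ∀ (y1 : E2) (l : ℝ), volume (Metric.ball y1 l) < ∞ :=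
    fun y1 l => measure_ball_lt_top
  have tball_fin : ∀ (y2 : T2pi) (l : ℝ), 0 < l → volume (Metric.ball y2 l) < ∞ :=
    fun y2 l hl => lt_of_le_of_lt (tball_le y2 l hl) ENNReal.ofReal_lt_top
  constructor
  · -- Part (i)
    refine ⟨1, one_pos, fun f => ?_⟩
    rw [morreyNorm]
    simp only [ENNReal.ofReal_one, one_mul]
    refine iSup_le fun y => iSup_le fun l => iSup_le fun hl => ?_
    obtain ⟨y1, y2⟩ := y
    set B := Metric.ball ((y1, y2) : E2 × T2pi) l with hB
    set V := volume B with hVdef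
    have hV0 : V ≠ 0 := by
      rw [hVdef, hB, ball_facts y1 y2 l hl]
      exact mul_ne_zero (eball_pos y1 l hl).ne' (tball_pos y2 l hl).ne'
    have hVtop : V ≠ ∞ := by
      rw [hVdef, hB, ball_facts y1 y2 l hl]
      exact ENNReal.mul_ne_top (eball_fin y1 l).ne (tball_fin y2 l hl).ne
    have hqofReal : ENNReal.ofReal q ≠ 0 := (ENNReal.ofReal_pos.mpr hq0).ne'
    have hpofReal : ENNReal.ofReal p ≠ 0 := (ENNReal.ofReal_pos.mpr hp0).ne'
    rcases eq_or_lt_of_le hqp with heq | hlt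
    · -- q = p
      subst heq
      rw [sub_self, ENNReal.rpow_zero, one_mul,
        eLpNorm_eq_lintegral_rpow_enorm_toReal hqofReal ENNReal.ofReal_ne_top,
        ENNReal.toReal_ofReal hq0.le]
      exact ENNReal.rpow_le_rpow (setLIntegral_le_lintegral _ _) (by positivity)
    · -- q < p
      set r := p / q with hr_def
      have hr1 : 1 < r := (one_lt_div hq0).mpr hlt
      have hrr' : r.HolderConjugate (Real.conjExponent r) :=
        Real.HolderConjugate.conjExponent hr1
      set r' := Real.conjExponent r with hr'_def
      have hr'0 : 0 < r' := hrr'.symm.left_pos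
      set I := ∫⁻ x, (‖f x‖₊ : ℝ≥0∞) ^ p ∂volume with hI
      obtain ⟨φ, hφm, hφle, hφeq⟩ :=
        exists_measurable_le_lintegral_eq (volume.restrict B) (fun x => (‖f x‖₊ : ℝ≥0∞) ^ q)
      have key : ∫⁻ x in B, (‖f x‖₊ : ℝ≥0∞) ^ q ∂volume ≤ I ^ (1 / r) * V ^ (1 / r') := by
        have hH := ENNReal.lintegral_mul_le_Lp_mul_Lq (volume.restrict B) hrr'
          hφm.aemeasurable (aemeasurable_const (b := (1 : ℝ≥0∞)))
        simp only [Pi.mul_apply, mul_one, ENNReal.one_rpow, lintegral_one,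
          Measure.restrict_apply_univ] at hH
        have h3 : (∫⁻ a, φ a ^ r ∂(volume.restrict B)) ^ (1 / r) ≤ I ^ (1 / r) := by
          refine ENNReal.rpow_le_rpow ?_ (by positivity)
          have hpt : ∀ x, φ x ^ r ≤ (‖f x‖₊ : ℝ≥0∞) ^ p := by
            intro x
            calc φ x ^ r ≤ ((‖f x‖₊ : ℝ≥0∞) ^ q) ^ r :=
                ENNReal.rpow_le_rpow (hφle x) (by positivity)
              _ = (‖f x‖₊ : ℝ≥0∞) ^ p := by
                  rw [← ENNReal.rpow_mul]
                  congr 1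
                  rw [hr_def]
                  field_simp
          calc ∫⁻ a, φ a ^ r ∂(volume.restrict B)
              ≤ ∫⁻ a, (‖f a‖₊ : ℝ≥0∞) ^ p ∂(volume.restrict B) := lintegral_mono hpt
            _ ≤ I := setLIntegral_le_lintegral _ _
        calc ∫⁻ x in B, (‖f x‖₊ : ℝ≥0∞) ^ q ∂volume
            = ∫⁻ a, φ a ∂(volume.restrict B) := hφeq
          _ ≤ (∫⁻ a, φ a ^ r ∂(volume.restrict B)) ^ (1 / r)
              * V ^ (1 / r') := hH
          _ ≤ I ^ (1 / r) * V ^ (1 / r') := mul_le_mul_left h3 _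
      have e1 : (1 / r) * (1 / q) = 1 / p := by
        rw [hr_def]
        field_simp [hq0.ne', hp0.ne']
        try ring
      have e2 : (1 / r') * (1 / q) = 1 / q - 1 / p := by
        have h1 : r⁻¹ + r'⁻¹ = 1 := hrr'.inv_add_inv_eq_one
        have h2 : r⁻¹ = q / p := by rw [hr_def, inv_div]
        have h3 : r'⁻¹ = 1 - q / p := by rw [← h2]; linarith
        rw [one_div, one_div, h3, sub_mul, one_mul, div_mul_eq_mul_div,
          mul_inv_cancel₀ hq0.ne']
      calc V ^ (1 / p - 1 / q) * (∫⁻ x in B, (‖f x‖₊ : ℝ≥0∞) ^ q ∂volume) ^ (1 / q)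
          ≤ V ^ (1 / p - 1 / q) * (I ^ (1 / r) * V ^ (1 / r')) ^ (1 / q) :=
            mul_le_mul_right (ENNReal.rpow_le_rpow key (by positivity)) _
        _ = V ^ (1 / p - 1 / q) * (I ^ (1 / p) * V ^ (1 / q - 1 / p)) := by
            rw [ENNReal.mul_rpow_of_nonneg _ _ (by positivity : (0:ℝ) ≤ 1 / q),
              ← ENNReal.rpow_mul, ← ENNReal.rpow_mul, e1, e2]
        _ = I ^ (1 / p) * (V ^ (1 / p - 1 / q) * V ^ (1 / q - 1 / p)) := by ring
        _ = I ^ (1 / p) := by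
            rw [← ENNReal.rpow_add _ _ hV0 hVtop]
            norm_num
        _ = eLpNorm f (ENNReal.ofReal p) volume := by
            rw [eLpNorm_eq_lintegral_rpow_enorm_toReal hpofReal ENNReal.ofReal_ne_top,
              ENNReal.toReal_ofReal hp0.le]
            rfl
  · -- Part (ii)
    set U := volume (Metric.ball (0 : E2) 1) with hU
    have hU0 : U ≠ 0 := (eball_pos 0 1 one_pos).ne'
    have hUtop : U ≠ ∞ := (eball_fin 0 1).ne
    have hu : 0 < U.toReal := ENNReal.toReal_pos hU0 hUtop
    set u := U.toReal with hu_def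
    set C := 1 + 4 / u with hC
    have hC1 : (1 : ℝ) ≤ C := le_add_of_nonneg_right (by positivity)
    have hCpos : (0 : ℝ) < C := lt_of_lt_of_le one_pos hC1
    refine ⟨C, hCpos, fun f hf => ?_⟩
    set D := ENNReal.ofReal C with hD
    have hD1 : (1 : ℝ≥0∞) ≤ D := by
      rw [hD, ← ENNReal.ofReal_one]
      exact ENNReal.ofReal_le_ofReal hC1
    -- Fourier coefficients
    set c : ℤ → E2 → ℂ := fun ζ x => fourierCoeff (fun z => f (x, z)) ζ with hc_def
    have hcm : ∀ ζ, StronglyMeasurable (c ζ) := by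
      intro ζ
      have hcont : Continuous fun w : E2 × T2pi => (fourier (-ζ) w.2 : ℂ) • f w :=
        ((map_continuous (fourier (-ζ))).comp continuous_snd).smul hf
      exact hcont.stronglyMeasurable.integral_prod_right'
    set h : ℤ → E2 → ℝ≥0∞ := fun ζ x => (‖c ζ x‖₊ : ℝ≥0∞) with hh_def
    have hhm : ∀ ζ, Measurable (h ζ) := fun ζ =>
      (hcm ζ).measurable.nnnorm.coe_nnreal_ennreal
    set g : E2 → ℝ≥0∞ := fun x => ∑' ζ : ℤ, h ζ x with hg_def
    have hgm : Measurable g := Measurable.ennreal_tsum hhm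
    have hgqm : Measurable fun x => g x ^ q := hgm.pow_const q
    -- pointwise bound
    have hpt : ∀ w : E2 × T2pi, (‖f w‖₊ : ℝ≥0∞) ≤ g w.1 := by
      rintro ⟨x, z⟩
      have hcont : Continuous fun z' : T2pi => f (x, z') := hf.comp (Continuous.prodMk_right x)
      exact aux_pointwise_fourier hcont z
    -- relation of BLp to the lintegrals
    have hqofReal : ENNReal.ofReal q ≠ 0 := (ENNReal.ofReal_pos.mpr hq0).ne'
    have hSeq : ∑' ζ : ℤ, (∫⁻ x, h ζ x ^ q ∂volume) ^ (1 / q) = BLp (ENNReal.ofReal q) f := by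
      rw [BLp]
      refine tsum_congr fun ζ => ?_
      rw [eLpNorm_eq_lintegral_rpow_enorm_toReal hqofReal ENNReal.ofReal_ne_top,
        ENNReal.toReal_ofReal hq0.le]
      rfl
    have step2 : (∫⁻ x, g x ^ q ∂volume) ^ (1 / q) ≤ BLp (ENNReal.ofReal q) f :=
      le_trans (aux_lintegral_lp_tsum_le hq hhm) (le_of_eq hSeq)
    -- the supremum
    rw [morreyNorm]
    refine iSup_le fun y => iSup_le fun l => iSup_le fun hl => ?_
    obtain ⟨y1, y2⟩ := y
    set τ := volume (Metric.ball y2 l) with hτ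
    set v := volume (Metric.ball y1 l) with hv
    have hτ0 : τ ≠ 0 := (tball_pos y2 l hl).ne'
    have hτtop : τ ≠ ∞ := (tball_fin y2 l hl).ne
    have hv0 : v ≠ 0 := (eball_pos y1 l hl).ne'
    have hvtop : v ≠ ∞ := (eball_fin y1 l).ne
    have hVeq : volume (Metric.ball ((y1, y2) : E2 × T2pi) l) = v * τ := ball_facts y1 y2 l hl
    have hV0 : volume (Metric.ball ((y1, y2) : E2 × T2pi) l) ≠ 0 := by
      rw [hVeq]; exact mul_ne_zero hv0 hτ0
    have hVtop : volume (Metric.ball ((y1, y2) : E2 × T2pi) l) ≠ ∞ := by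
      rw [hVeq]; exact ENNReal.mul_ne_top hvtop hτtop
    have hv_eq : v = ENNReal.ofReal (l ^ 2) * U := by
      rw [hv, hU, Measure.addHaar_ball volume y1 hl.le, finrank_euclideanSpace_fin]
    -- Step 1: bound the integral over the ball
    have step1 : ∫⁻ w in Metric.ball ((y1, y2) : E2 × T2pi) l, (‖f w‖₊ : ℝ≥0∞) ^ q ∂volume
        ≤ (∫⁻ x, g x ^ q ∂volume) * τ := by
      calc ∫⁻ w in Metric.ball ((y1, y2) : E2 × T2pi) l, (‖f w‖₊ : ℝ≥0∞) ^ q ∂volume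
          ≤ ∫⁻ w in Metric.ball ((y1, y2) : E2 × T2pi) l, g w.1 ^ q ∂volume :=
            lintegral_mono fun w => ENNReal.rpow_le_rpow (hpt w) hq0.le
        _ = ∫⁻ w in (Metric.ball y1 l ×ˢ Metric.ball y2 l), g w.1 ^ q ∂volume := by
            rw [ball_prod_same]
        _ = (∫⁻ x in Metric.ball y1 l, g x ^ q ∂volume) * τ := by
            rw [Measure.volume_eq_prod, ← Measure.prod_restrict,
              lintegral_prod (fun w => g w.1 ^ q) ((hgqm.comp measurable_fst).aemeasurable)]
            simp_rw [lintegral_const, Measure.restrict_apply_univ]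
            rw [lintegral_mul_const' τ _ hτtop]
        _ ≤ (∫⁻ x, g x ^ q ∂volume) * τ :=
            mul_le_mul_left (setLIntegral_le_lintegral _ _) τ
    -- Step 3: geometry of the ball volumes
    have hτ2 : τ ^ (2 : ℝ) ≤ D * v := by
      have h4 : ENNReal.ofReal 4 ≤ D * U := by
        rw [hD, show U = ENNReal.ofReal u from (ENNReal.ofReal_toReal hUtop).symm,
          ← ENNReal.ofReal_mul hCpos.le]
        refine ENNReal.ofReal_le_ofReal ?_
        have hCu : C * u = u + 4 := by
          rw [hC]; field_simp
        rw [hCu]; linarith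
      calc τ ^ (2 : ℝ) ≤ (ENNReal.ofReal (2 * l)) ^ (2 : ℝ) :=
            ENNReal.rpow_le_rpow (tball_le y2 l hl) (by norm_num)
        _ = ENNReal.ofReal (4 * l ^ 2) := by
            rw [ENNReal.ofReal_rpow_of_nonneg (by positivity) (by norm_num)]
            congr 1
            rw [show (2 : ℝ) = ((2 : ℕ) : ℝ) by norm_num, Real.rpow_natCast]
            ring
        _ = ENNReal.ofReal 4 * ENNReal.ofReal (l ^ 2) := by
            rw [← ENNReal.ofReal_mul (by norm_num)]
        _ ≤ (D * U) * ENNReal.ofReal (l ^ 2) := mul_le_mul_left h4 _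
        _ = D * (ENNReal.ofReal (l ^ 2) * U) := by ring
        _ = D * v := by rw [← hv_eq]
    have hτ3 : τ ^ (3 : ℝ) ≤ D ^ (3 * q) * volume (Metric.ball ((y1, y2) : E2 × T2pi) l) := by
      have hDq : D ≤ D ^ (3 * q) := by
        calc D = D ^ (1 : ℝ) := (ENNReal.rpow_one _).symm
          _ ≤ D ^ (3 * q) := ENNReal.rpow_le_rpow_of_exponent_le hD1 (by linarith)
      calc τ ^ (3 : ℝ) = τ ^ (2 : ℝ) * τ := by
            rw [show (3 : ℝ) = 2 + 1 by norm_num, ENNReal.rpow_add _ _ hτ0 hτtop,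
              ENNReal.rpow_one]
        _ ≤ (D * v) * τ := mul_le_mul_left hτ2 τ
        _ = D * (v * τ) := by ring
        _ ≤ D ^ (3 * q) * (v * τ) := mul_le_mul_left hDq _
        _ = D ^ (3 * q) * volume (Metric.ball ((y1, y2) : E2 × T2pi) l) := by rw [hVeq]
    have h3q : (0 : ℝ) < 3 * q := by linarith
    have hgeo : τ ^ (1 / q)
        ≤ D * volume (Metric.ball ((y1, y2) : E2 × T2pi) l) ^ (1 / (3 * q)) := by
      have hmono := ENNReal.rpow_le_rpow hτ3 (by positivity : (0 : ℝ) ≤ 1 / (3 * q))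
      rwa [← ENNReal.rpow_mul, show (3 : ℝ) * (1 / (3 * q)) = 1 / q by field_simp,
        ENNReal.mul_rpow_of_nonneg _ _ (by positivity : (0 : ℝ) ≤ 1 / (3 * q)),
        ← ENNReal.rpow_mul, mul_one_div_cancel h3q.ne', ENNReal.rpow_one] at hmono
    have he : 1 / (3 * q / 2) - 1 / q = -(1 / (3 * q)) := by
      field_simp
      ring
    -- conclusion
    calc volume (Metric.ball ((y1, y2) : E2 × T2pi) l) ^ (1 / (3 * q / 2) - 1 / q)
          * (∫⁻ w in Metric.ball ((y1, y2) : E2 × T2pi) l, (‖f w‖₊ : ℝ≥0∞) ^ q ∂volume) ^ (1 / q)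
        ≤ volume (Metric.ball ((y1, y2) : E2 × T2pi) l) ^ (1 / (3 * q / 2) - 1 / q)
          * ((∫⁻ x, g x ^ q ∂volume) * τ) ^ (1 / q) :=
          mul_le_mul_right (ENNReal.rpow_le_rpow step1 (by positivity)) _
      _ = volume (Metric.ball ((y1, y2) : E2 × T2pi) l) ^ (1 / (3 * q / 2) - 1 / q)
          * ((∫⁻ x, g x ^ q ∂volume) ^ (1 / q) * τ ^ (1 / q)) := by
          rw [ENNReal.mul_rpow_of_nonneg _ _ (by positivity : (0 : ℝ) ≤ 1 / q)]
      _ ≤ volume (Metric.ball ((y1, y2) : E2 × T2pi) l) ^ (1 / (3 * q / 2) - 1 / q)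
          * (BLp (ENNReal.ofReal q) f * τ ^ (1 / q)) :=
          mul_le_mul_right (mul_le_mul_left step2 _) _
      _ ≤ volume (Metric.ball ((y1, y2) : E2 × T2pi) l) ^ (1 / (3 * q / 2) - 1 / q)
          * (BLp (ENNReal.ofReal q) f
            * (D * volume (Metric.ball ((y1, y2) : E2 × T2pi) l) ^ (1 / (3 * q)))) :=
          mul_le_mul_right (mul_le_mul_right hgeo _) _
      _ = (D * BLp (ENNReal.ofReal q) f)
          * (volume (Metric.ball ((y1, y2) : E2 × T2pi) l) ^ (1 / (3 * q / 2) - 1 / q)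
            * volume (Metric.ball ((y1, y2) : E2 × T2pi) l) ^ (1 / (3 * q))) := by ring
      _ = D * BLp (ENNReal.ofReal q) f := by
          rw [← ENNReal.rpow_add _ _ hV0 hVtop, he]
          norm_num
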